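/- Let M be a connected matroid with cycle system C = (C_1, …, C_g). Then every C_i is a circuit of M. -/

import Mathlib

open Set Matroid

/-- The unique union of the subfamily of `A` indexed by `σ`: the set of elements that lie in
`A i` for exactly one index `i ∈ σ`. -/
def uniqueUnion {α ι : Type*} (A : ι → Set α) (σ : Finset ι) : Set α :=
  {e | ∃! i, i ∈ σ ∧ e ∈ A i}

namespace Matroid

variable {α : Type*}

/-- A circuit of a matroid: a minimal dependent set. -/
def Circuit (M : Matroid α) (C : Set α) : Prop := Minimal M.Dep C

/-- A cycle of a matroid: a union of circuits. -/
def IsCycle (M : Matroid α) (K : Set α) : Prop :=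
  ∃ S : Set (Set α), (∀ C ∈ S, M.Circuit C) ∧ K = ⋃₀ S

/-- The rank of a matroid: the cardinality of a base. -/
noncomputable def rkNat (M : Matroid α) : ℕ := M.exists_isBase.choose.ncard

/-- A cycle system for `M`: a family of cycles, indexed by a finite type whose cardinality is
the corank `|E| - rank` of `M`, such that the unique union of every nonempty subfamily is
dependent. -/
def IsCycleSystem (M : Matroid α) {ι : Type*} [Fintype ι] (C : ι → Set α) : Prop :=
  Fintype.card ι = M.E.ncard - M.rkNat ∧ (∀ i, M.IsCycle (C i)) ∧
    ∀ σ : Finset ι, σ.Nonempty → M.Dep (uniqueUnion C σ)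

/-- Deletion of a set of elements from a matroid. -/
def delete' (M : Matroid α) (D : Set α) : Matroid α := M ↾ (M.E \ D)

/-- Contraction of a set of elements in a matroid, defined via duality. -/
def contract' (M : Matroid α) (X : Set α) : Matroid α := (M✶.delete' X)✶

end Matroid

/-- A coparking function with respect to a family `C` of sets: a vector `a` of naturals such
that every nonempty index set `σ` contains some `i` with `a i < |C i ∩ uniqueUnion C σ|`. -/
def IsCoparking {α ι : Type*} [Fintype ι] (C : ι → Set α) (a : ι → ℕ) : Prop :=
  ∀ σ : Finset ι, σ.Nonempty → ∃ i ∈ σ, a i < (C i ∩ uniqueUnion C σ).ncard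

namespace Matroid

variable {α : Type*} {M : Matroid α} {C D X Y I J : Set α} {e x : α}

/-! ### Circuit basics -/

theorem Circuit.dep (h : M.Circuit C) : M.Dep C := h.1

theorem Circuit.nonempty (h : M.Circuit C) : C.Nonempty := h.1.nonempty

theorem Circuit.subset_ground (h : M.Circuit C) : C ⊆ M.E := h.1.subset_ground

theorem Circuit.eq_of_dep_subset (h : M.Circuit C) (hX : M.Dep X) (hXC : X ⊆ C) : X = C :=
  hXC.antisymm (h.2 hX hXC)

theorem Circuit.ssubset_indep (h : M.Circuit C) (hX : X ⊂ C) : M.Indep X := by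
  by_contra hdep
  have hX' : M.Dep X := ⟨hdep, hX.subset.trans h.subset_ground⟩
  exact hX.ne (h.eq_of_dep_subset hX' hX.subset)

theorem Circuit.diff_singleton_indep (h : M.Circuit C) (hx : x ∈ C) : M.Indep (C \ {x}) :=
  h.ssubset_indep (diff_singleton_ssubset.2 hx)

theorem Circuit.mem_closure_diff_singleton (h : M.Circuit C) (hx : x ∈ C) :
    x ∈ M.closure (C \ {x}) := by
  have hind := h.diff_singleton_indep hx
  have hdep : M.Dep (insert x (C \ {x})) := by
    rw [insert_diff_singleton, insert_eq_of_mem hx]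
    exact h.dep
  exact (hind.insert_dep_iff.1 hdep).1

theorem Dep.exists_circuit_subset (hX : M.Dep X) (hfin : X.Finite) :
    ∃ D, M.Circuit D ∧ D ⊆ X := by
  obtain ⟨D, hD, hmin⟩ := Set.Finite.exists_minimal (s := {Y | M.Dep Y ∧ Y ⊆ X})
    (Set.Finite.finite_subsets hfin |>.subset (fun Y hY => hY.2)) ⟨X, hX, Subset.rfl⟩
  refine ⟨D, ⟨hD.1, fun Y hY hYD => ?_⟩, hD.2⟩
  exact hmin ⟨hY, hYD.trans hD.2⟩ hYD

/-! ### Rank -/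

/-- Our bespoke rank of a set. -/
noncomputable def mrank (M : Matroid α) (X : Set α) : ℕ := (M ↾ X).rkNat

theorem rkNat_eq_ncard_of_base (hB : M.IsBase X) : M.rkNat = X.ncard :=
  M.exists_isBase.choose_spec.ncard_eq_ncard_of_isBase hB

theorem IsBasis'.mrank_eq (hJ : M.IsBasis' J X) : M.mrank X = J.ncard :=
  rkNat_eq_ncard_of_base (isBase_restrict_iff'.2 hJ)

theorem exists_basis'_mrank (M : Matroid α) (X : Set α) :
    ∃ J, M.IsBasis' J X ∧ M.mrank X = J.ncard := by
  obtain ⟨J, hJ⟩ := M.exists_isBasis' X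
  exact ⟨J, hJ, hJ.mrank_eq⟩

theorem Indep.mrank_eq (hI : M.Indep I) : M.mrank I = I.ncard :=
  (hI.isBasis_self.isBasis').mrank_eq

theorem mrank_le_ncard (M : Matroid α) (X : Set α) (hfin : X.Finite) : M.mrank X ≤ X.ncard := by
  obtain ⟨J, hJ, h⟩ := M.exists_basis'_mrank X
  rw [h]
  exact ncard_le_ncard hJ.subset hfin

theorem Indep.ncard_le_mrank (hS : M.Indep I) (hIX : I ⊆ X) (hfin : X.Finite) :
    I.ncard ≤ M.mrank X := by
  obtain ⟨J, hJ, hIJ⟩ := hS.subset_isBasis'_of_subset hIX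
  rw [hJ.mrank_eq]
  exact ncard_le_ncard hIJ (hfin.subset hJ.subset)

theorem mrank_mono (M : Matroid α) (hXY : X ⊆ Y) (hfin : Y.Finite) :
    M.mrank X ≤ M.mrank Y := by
  obtain ⟨J, hJ, h⟩ := M.exists_basis'_mrank X
  rw [h]
  exact hJ.indep.ncard_le_mrank (hJ.subset.trans hXY) hfin

theorem Dep.mrank_add_one_le_ncard (hX : M.Dep X) (hfin : X.Finite) :
    M.mrank X + 1 ≤ X.ncard := by
  obtain ⟨J, hJ, h⟩ := M.exists_basis'_mrank X
  rw [h]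
  have hss : J ⊂ X := by
    refine hJ.subset.ssubset_of_ne ?_
    rintro rfl
    exact hX.not_indep hJ.indep
  have := ncard_lt_ncard hss hfin
  omega

theorem Circuit.mrank_add_one_eq (hC : M.Circuit C) (hfin : C.Finite) :
    M.mrank C + 1 = C.ncard := by
  refine le_antisymm (hC.dep.mrank_add_one_le_ncard hfin) ?_
  obtain ⟨x, hx⟩ := hC.nonempty
  have h1 : (C \ {x}).ncard ≤ M.mrank C :=
    (hC.diff_singleton_indep hx).ncard_le_mrank diff_subset hfin
  have h2 : (C \ {x}).ncard + 1 = C.ncard := by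
    rw [ncard_diff_singleton_add_one hx hfin]
  omega

end Matroid

namespace Matroid

variable {α : Type*} {M : Matroid α} {C D X Y S I J : Set α} {e x : α}

theorem IsBasis'.eq_inter_of_subset_indep (hJ : M.IsBasis' J X) (hK : M.Indep K)
    (hJK : J ⊆ K) : K ∩ X = J := by
  refine subset_antisymm ?_ (subset_inter hJK hJ.subset)
  exact hJ.2 ⟨hK.inter_right X, inter_subset_right⟩ (subset_inter hJK hJ.subset)

theorem mrank_union_le (M : Matroid α) (X S : Set α) (hX : X.Finite) (hS : S.Finite) :
    M.mrank (X ∪ S) ≤ M.mrank X + S.ncard := by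
  obtain ⟨J, hJ, hJr⟩ := M.exists_basis'_mrank X
  obtain ⟨K, hK, hJK⟩ := hJ.indep.subset_isBasis'_of_subset (hJ.subset.trans subset_union_left)
  have hKX : K ∩ X = J := hJ.eq_inter_of_subset_indep hK.indep hJK
  have hKsub : K ⊆ J ∪ S := by
    intro k hk
    rcases hK.subset hk with hkX | hkS
    · exact Or.inl (hKX ▸ ⟨hk, hkX⟩)
    · exact Or.inr hkS
  rw [hK.mrank_eq, hJr]
  calc K.ncard ≤ (J ∪ S).ncard := ncard_le_ncard hKsub ((hX.subset hJ.subset).union hS)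
    _ ≤ J.ncard + S.ncard := ncard_union_le J S

theorem mrank_union_eq_of_subset_closure (hXE : X ⊆ M.E) (hY : Y ⊆ M.closure X) :
    M.mrank (X ∪ Y) = M.mrank X := by
  obtain ⟨J, hJ, hJr⟩ := M.exists_basis'_mrank X
  have hclJ : M.closure J = M.closure X := hJ.closure_eq_closure
  have hJb : M.IsBasis' J (X ∪ Y) := by
    constructor
    · exact ⟨hJ.indep, hJ.subset.trans subset_union_left⟩
    · rintro K ⟨hKind, hKsub⟩ hJK
      intro k hk
      by_contra hkJ
      have hkcl : k ∈ M.closure J := by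
        rw [hclJ]
        rcases hKsub hk with h | h
        · exact M.subset_closure X hXE h
        · exact hY h
      have hins : M.Indep (insert k J) := hKind.subset (insert_subset hk hJK)
      rw [hJ.indep.insert_indep_iff_of_notMem hkJ] at hins
      exact hins.2 hkcl
  rw [hJb.mrank_eq, hJr]

theorem mrank_submod (M : Matroid α) (X Y : Set α) (hX : X.Finite) (hY : Y.Finite) :
    M.mrank (X ∪ Y) + M.mrank (X ∩ Y) ≤ M.mrank X + M.mrank Y := by
  obtain ⟨I, hI, hIr⟩ := M.exists_basis'_mrank (X ∩ Y)
  obtain ⟨K, hK, hIK⟩ := hI.indep.subset_isBasis'_of_subset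
    (hI.subset.trans (inter_subset_left.trans subset_union_left))
  have hKfin : K.Finite := (hX.union hY).subset hK.subset
  have hKXY : K ∩ (X ∩ Y) = I := hI.eq_inter_of_subset_indep hK.indep hIK
  have h1 : (K ∩ X).ncard ≤ M.mrank X := (hK.indep.inter_right X).ncard_le_mrank
    inter_subset_right hX
  have h2 : (K ∩ Y).ncard ≤ M.mrank Y := (hK.indep.inter_right Y).ncard_le_mrank
    inter_subset_right hY
  have hcup : K ∩ X ∪ K ∩ Y = K := by
    rw [← inter_union_distrib_left]
    exact inter_eq_self_of_subset_left hK.subset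
  have hcap : (K ∩ X) ∩ (K ∩ Y) = I := by
    rw [← hKXY]; ext a; simp; tauto
  have hsum : (K ∩ X).ncard + (K ∩ Y).ncard = K.ncard + I.ncard := by
    have h3 := ncard_inter_add_ncard_union (K ∩ X) (K ∩ Y) (hKfin.inter_of_left X)
      (hKfin.inter_of_left Y)
    rw [hcup, hcap] at h3
    omega
  rw [hK.mrank_eq, hIr]
  omega

theorem mrank_restrict (M : Matroid α) {R : Set α} (hXR : X ⊆ R) :
    (M ↾ R).mrank X = M.mrank X := by
  rw [mrank, mrank, M.restrict_restrict_eq hXR]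

theorem mrank_ground (M : Matroid α) : M.mrank M.E = M.rkNat := by
  rw [mrank, restrict_ground_eq_self]

theorem mrank_insert_of_not_mem_closure (hXE : X ⊆ M.E) (hfin : X.Finite) (heE : e ∈ M.E)
    (he : e ∉ M.closure X) : M.mrank X + 1 ≤ M.mrank (insert e X) := by
  obtain ⟨J, hJ, hJr⟩ := M.exists_basis'_mrank X
  have hclJ : M.closure J = M.closure X := hJ.closure_eq_closure
  have heX : e ∉ X := fun h => he (M.subset_closure X hXE h)
  have heJ : e ∉ J := fun h => heX (hJ.subset h)
  have hins : M.Indep (insert e J) := by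
    rw [hJ.indep.insert_indep_iff_of_notMem heJ]
    exact ⟨heE, fun h => he (hclJ ▸ h)⟩
  have := hins.ncard_le_mrank (insert_subset_insert hJ.subset) (hfin.insert e)
  rw [ncard_insert_of_notMem heJ (hfin.subset hJ.subset)] at this
  omega

theorem mem_closure_of_mrank_le (hXE : X ⊆ M.E) (hfin : X.Finite) (heE : e ∈ M.E)
    (h : M.mrank (insert e X) ≤ M.mrank X) : e ∈ M.closure X := by
  by_contra hcl
  have := mrank_insert_of_not_mem_closure hXE hfin heE hcl
  omega

/-- If `x` is in the closure of `S` then there is a circuit of `x` inside `insert x S`. -/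
theorem exists_circuit_of_mem_closure (hx : x ∈ M.closure S) (hxS : x ∉ S)
    (hfin : S.Finite) : ∃ D, M.Circuit D ∧ x ∈ D ∧ D ⊆ insert x S := by
  obtain ⟨J, hJ⟩ := M.exists_isBasis' S
  have hclJ : M.closure J = M.closure S := hJ.closure_eq_closure
  have hxJ : x ∉ J := fun h => hxS (hJ.subset h)
  have hdep : M.Dep (insert x J) := by
    rw [hJ.indep.insert_dep_iff]
    exact ⟨hclJ ▸ hx, hxJ⟩
  obtain ⟨D, hD, hDsub⟩ := hdep.exists_circuit_subset (((hfin.subset hJ.subset)).insert x)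
  refine ⟨D, hD, ?_, hDsub.trans (insert_subset_insert hJ.subset)⟩
  by_contra hxD
  exact (hD.dep.not_indep) (hJ.indep.subset (fun a ha => ((hDsub ha).resolve_left
    (fun h => hxD (h ▸ ha)))))

end Matroid
namespace Matroid

variable {α : Type*} {M : Matroid α} {C D X Y S I J : Set α} {e x a z : α} {k : ℕ}

/-! ### Nullity style lemmas -/

theorem nul_mono (hXY : X ⊆ Y) (hY : Y.Finite) (h : M.mrank X + k ≤ X.ncard) :
    M.mrank Y + k ≤ Y.ncard := by
  have h1 : M.mrank Y ≤ M.mrank X + (Y \ X).ncard := by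
    have := M.mrank_union_le X (Y \ X) (hY.subset hXY) (hY.diff (t := X))
    rwa [union_diff_cancel hXY] at this
  have h2 : X.ncard + (Y \ X).ncard = Y.ncard := by
    rw [← ncard_union_eq (disjoint_sdiff_right) (hY.subset hXY) (hY.diff (t := X)),
      union_diff_cancel hXY]
  omega

theorem nul_union_circuit (hXE : X ⊆ M.E) (hfin : M.E.Finite) (hD : M.Circuit D)
    (hDX : ¬ D ⊆ X) (h : M.mrank X + k ≤ X.ncard) :
    M.mrank (X ∪ D) + (k + 1) ≤ (X ∪ D).ncard := by
  obtain ⟨x, hxD, hxX⟩ := not_subset.1 hDX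
  have hDE : D ⊆ M.E := hD.subset_ground
  have hXfin : X.Finite := hfin.subset hXE
  have hDfin : D.Finite := hfin.subset hDE
  have hxcl : x ∈ M.closure (X ∪ (D \ {x})) :=
    (M.closure_subset_closure subset_union_right) (hD.mem_closure_diff_singleton hxD)
  have hr1 : M.mrank (X ∪ D) = M.mrank (X ∪ (D \ {x})) := by
    have heq : (X ∪ (D \ {x})) ∪ {x} = X ∪ D := by
      ext a; simp only [mem_union, mem_diff, mem_singleton_iff]
      constructor
      · rintro ((h | ⟨h, _⟩) | rfl) 
        · exact Or.inl h
        · exact Or.inr h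
        · exact Or.inr hxD
      · rintro (h | h)
        · exact Or.inl (Or.inl h)
        · by_cases hax : a = x
          · exact Or.inr hax
          · exact Or.inl (Or.inr ⟨h, hax⟩)
    rw [← heq]
    exact mrank_union_eq_of_subset_closure (union_subset hXE (diff_subset.trans hDE))
      (by simpa using hxcl)
  have hr2 : M.mrank (X ∪ (D \ {x})) ≤ M.mrank X + ((D \ X) \ {x}).ncard := by
    have heq : X ∪ (D \ {x}) = X ∪ ((D \ X) \ {x}) := by
      ext a; simp only [mem_union, mem_diff, mem_singleton_iff]; constructor
      · rintro (h | ⟨h1, h2⟩)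
        · exact Or.inl h
        · by_cases haX : a ∈ X
          · exact Or.inl haX
          · exact Or.inr ⟨⟨h1, haX⟩, h2⟩
      · rintro (h | ⟨⟨h1, _⟩, h2⟩)
        · exact Or.inl h
        · exact Or.inr ⟨h1, h2⟩
    rw [heq]
    exact M.mrank_union_le X _ hXfin ((hDfin.diff (t := X)).diff (t := {x}))
  have hcard1 : ((D \ X) \ {x}).ncard + 1 = (D \ X).ncard :=
    ncard_diff_singleton_add_one ⟨hxD, hxX⟩ (hDfin.diff (t := X))
  have hcard2 : (X ∪ D).ncard = X.ncard + (D \ X).ncard := by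
    rw [← ncard_union_eq disjoint_sdiff_right hXfin (hDfin.diff (t := X)), union_diff_self]
  omega

/-! ### Rank connectivity -/

/-- Rank-form connectivity : every separation has ranks summing to more than the total. -/
def ConnR (M : Matroid α) : Prop := ∀ ⦃X Y : Set α⦄, X ∪ Y = M.E → Disjoint X Y →
    X.Nonempty → Y.Nonempty → M.mrank M.E < M.mrank X + M.mrank Y

theorem subskew {X' Y' : Set α} (hfin : M.E.Finite) (hXE : X ⊆ M.E) (hYE : Y ⊆ M.E)
    (hdisj : Disjoint X Y) (h : M.mrank X + M.mrank Y ≤ M.mrank (X ∪ Y))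
    (hX' : X' ⊆ X) (hY' : Y' ⊆ Y) :
    M.mrank X' + M.mrank Y' ≤ M.mrank (X' ∪ Y') := by
  have hXfin : X.Finite := hfin.subset hXE
  have hYfin : Y.Finite := hfin.subset hYE
  have s1 := M.mrank_submod (X' ∪ Y') X ((hXfin.subset hX').union (hYfin.subset hY')) hXfin
  have s2 := M.mrank_submod (X ∪ Y') Y (hXfin.union (hYfin.subset hY')) hYfin
  have e1 : (X' ∪ Y') ∪ X = X ∪ Y' := by
    rw [union_comm X' Y', union_assoc]
    rw [union_eq_self_of_subset_left hX', union_comm]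
  have e2 : (X' ∪ Y') ∩ X = X' := by
    rw [union_inter_distrib_right, inter_eq_self_of_subset_left hX',
      (hdisj.symm.mono_left hY').inter_eq, union_empty]
  have e3 : (X ∪ Y') ∪ Y = X ∪ Y := by
    rw [union_assoc, union_eq_self_of_subset_left hY']
  have e4 : (X ∪ Y') ∩ Y = Y' := by
    rw [union_inter_distrib_right, hdisj.inter_eq, empty_union,
      inter_eq_self_of_subset_left hY']
  rw [e1, e2] at s1
  rw [e3, e4] at s2
  omega

theorem not_crossing_circuit (hfin : M.E.Finite) (hXY : X ∪ Y = M.E) (hdisj : Disjoint X Y)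
    (h : M.mrank X + M.mrank Y ≤ M.mrank M.E) (hD : M.Circuit D) :
    D ∩ Y = ∅ ∨ D ∩ X = ∅ := by
  by_contra hcon
  push_neg at hcon
  obtain ⟨hDY, hDX⟩ := hcon
  obtain ⟨y, hyD, hyY⟩ := hDY
  obtain ⟨a, haD, haX⟩ := hDX
  have hXE : X ⊆ M.E := hXY ▸ subset_union_left
  have hYE : Y ⊆ M.E := hXY ▸ subset_union_right
  have hs := subskew hfin hXE hYE hdisj (by rw [hXY]; exact h)
    (inter_subset_right (s := D)) (inter_subset_right (s := D))
  have hunion : (D ∩ X) ∪ (D ∩ Y) = D := by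
    rw [← inter_union_distrib_left, hXY, inter_eq_self_of_subset_left hD.subset_ground]
  rw [hunion] at hs
  have hDfin : D.Finite := hfin.subset hD.subset_ground
  have hXind : M.Indep (D ∩ X) := by
    refine hD.ssubset_indep (inter_subset_left.ssubset_of_ne fun hEq => ?_)
    rw [← hEq] at hyD
    exact hdisj.ne_of_mem hyD.2 hyY rfl
  have hYind : M.Indep (D ∩ Y) := by
    refine hD.ssubset_indep (inter_subset_left.ssubset_of_ne fun hEq => ?_)
    rw [← hEq] at haD
    exact hdisj.ne_of_mem haX haD.2 rfl
  have hcard : (D ∩ X).ncard + (D ∩ Y).ncard = D.ncard := by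
    rw [← ncard_union_eq (hdisj.mono inter_subset_right inter_subset_right)
      (hDfin.inter_of_left X) (hDfin.inter_of_left Y), hunion]
  have hrD := hD.mrank_add_one_eq hDfin
  rw [hXind.mrank_eq, hYind.mrank_eq] at hs
  omega

/-- Pair-connectivity implies rank connectivity. -/
theorem connR_of_pairs (hfin : M.E.Finite)
    (hconn : ∀ e ∈ M.E, ∀ f ∈ M.E, e ≠ f → ∃ D, M.Circuit D ∧ e ∈ D ∧ f ∈ D) :
    M.ConnR := by
  intro X Y hXY hdisj hXne hYne
  by_contra hle
  push_neg at hle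
  obtain ⟨a, ha⟩ := hXne
  obtain ⟨z, hz⟩ := hYne
  have haE : a ∈ M.E := hXY ▸ Or.inl ha
  have hzE : z ∈ M.E := hXY ▸ Or.inr hz
  obtain ⟨D, hD, haD, hzD⟩ := hconn a haE z hzE (hdisj.ne_of_mem ha hz)
  rcases not_crossing_circuit hfin hXY hdisj hle hD with h | h
  · exact (h ▸ (⟨hzD, hz⟩ : z ∈ D ∩ Y) : z ∈ (∅ : Set α))
  · exact (h ▸ (⟨haD, ha⟩ : a ∈ D ∩ X) : a ∈ (∅ : Set α))

theorem ConnR.nonloop (hM : M.ConnR) (hfin : M.E.Finite) (h2 : 2 ≤ M.E.ncard)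
    (he : e ∈ M.E) : M.Indep {e} := by
  by_contra hdep
  have hr : M.mrank {e} = 0 := by
    have hle := (dep_of_not_indep hdep (by simpa using he)).mrank_add_one_le_ncard
      (finite_singleton e)
    simp [ncard_singleton] at hle
    omega
  have hpart : {e} ∪ (M.E \ {e}) = M.E := by
    rw [union_diff_cancel (by simpa using he)]
  have hne : (M.E \ {e}).Nonempty := by
    rw [nonempty_iff_ne_empty]
    intro hcon
    have h1 : M.E ⊆ {e} := diff_eq_empty.1 hcon
    have := ncard_le_ncard h1 (finite_singleton e)
    simp [ncard_singleton] at this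
    omega
  have := hM hpart disjoint_sdiff_right (singleton_nonempty e) hne
  have hmono := M.mrank_mono (diff_subset (s := M.E) (t := {e})) hfin
  omega

theorem ConnR.exists_circuit_mem (hM : M.ConnR) (hfin : M.E.Finite) (h2 : 2 ≤ M.E.ncard)
    (he : e ∈ M.E) : ∃ D, M.Circuit D ∧ e ∈ D := by
  have hpart : {e} ∪ (M.E \ {e}) = M.E := by
    rw [union_diff_cancel (by simpa using he)]
  have hne : (M.E \ {e}).Nonempty := by
    rw [nonempty_iff_ne_empty]
    intro hcon
    have h1 : M.E ⊆ {e} := diff_eq_empty.1 hcon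
    have := ncard_le_ncard h1 (finite_singleton e)
    simp [ncard_singleton] at this
    omega
  by_cases hcl : e ∈ M.closure (M.E \ {e})
  · obtain ⟨D, hD, heD, _⟩ := exists_circuit_of_mem_closure hcl (by simp) (hfin.diff (t := {e}))
    exact ⟨D, hD, heD⟩
  · exfalso
    have hins := mrank_insert_of_not_mem_closure diff_subset (hfin.diff (t := {e})) he hcl
    rw [insert_diff_singleton, insert_eq_of_mem he] at hins
    have h1 : M.mrank {e} ≤ 1 := by
      have := M.mrank_le_ncard {e} (finite_singleton e)
      simpa [ncard_singleton] using this
    have := hM hpart disjoint_sdiff_right (singleton_nonempty e) hne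
    omega

/-- Under rank connectivity there is a base avoiding any given element. -/
theorem ConnR.exists_base_not_mem (hM : M.ConnR) (hfin : M.E.Finite) (h2 : 2 ≤ M.E.ncard)
    (he : e ∈ M.E) : ∃ B, M.IsBase B ∧ e ∉ B := by
  have hpart : {e} ∪ (M.E \ {e}) = M.E := by
    rw [union_diff_cancel (by simpa using he)]
  have hne : (M.E \ {e}).Nonempty := by
    rw [nonempty_iff_ne_empty]
    intro hcon
    have h1 : M.E ⊆ {e} := diff_eq_empty.1 hcon
    have := ncard_le_ncard h1 (finite_singleton e)
    simp [ncard_singleton] at this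
    omega
  have hcl : e ∈ M.closure (M.E \ {e}) := by
    by_contra hcl
    have hins := mrank_insert_of_not_mem_closure diff_subset (hfin.diff (t := {e})) he hcl
    rw [insert_diff_singleton, insert_eq_of_mem he] at hins
    have h1 : M.mrank {e} ≤ 1 := by
      have := M.mrank_le_ncard {e} (finite_singleton e)
      simpa [ncard_singleton] using this
    have := hM hpart disjoint_sdiff_right (singleton_nonempty e) hne
    omega
  obtain ⟨J, hJ⟩ := M.exists_isBasis (M.E \ {e}) diff_subset
  have hJbase : M.IsBase J := by
    refine hJ.indep.isBase_of_ground_subset_closure ?_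
    have h1 : M.closure J = M.closure (M.E \ {e}) := hJ.closure_eq_closure
    intro f hf
    by_cases hfe : f = e
    · rw [h1, hfe]; exact hcl
    · rw [h1]
      exact M.subset_closure (M.E \ {e}) diff_subset ⟨hf, hfe⟩
  exact ⟨J, hJbase, fun hcon => (hJ.subset hcon).2 rfl⟩

end Matroid
namespace Matroid

variable {α : Type*} {M : Matroid α} {C D X Y S I J K : Set α} {e x a z : α} {k : ℕ}

/-! ### Single-element contraction -/

/-- Contraction of a single non-loop element, built from axioms. -/
noncomputable def conElem (M : Matroid α) (e : α) (hfin : M.E.Finite) (he : M.Indep {e}) :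
    Matroid α :=
  (IndepMatroid.ofFinite (E := M.E \ {e}) (hfin.diff (t := {e}))
    (Indep := fun X => M.Indep (insert e X) ∧ e ∉ X)
    (indep_empty := ⟨by simpa using he, notMem_empty e⟩)
    (indep_subset := fun I J hJ hIJ =>
      ⟨hJ.1.subset (insert_subset_insert hIJ), fun h => hJ.2 (hIJ h)⟩)
    (indep_aug := by
      rintro I J ⟨hIi, heI⟩ ⟨hJi, heJ⟩ hcard
      have hIfin : I.Finite := hfin.subset ((subset_insert e I).trans hIi.subset_ground)
      have hJfin : J.Finite := hfin.subset ((subset_insert e J).trans hJi.subset_ground)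
      have henc : (insert e I).encard < (insert e J).encard := by
        rw [encard_insert_of_notMem heI, encard_insert_of_notMem heJ,
          ← hIfin.cast_ncard_eq, ← hJfin.cast_ncard_eq]
        rw [show ((I.ncard : ℕ∞) + 1) = ((I.ncard + 1 : ℕ) : ℕ∞) by push_cast; rfl,
          show ((J.ncard : ℕ∞) + 1) = ((J.ncard + 1 : ℕ) : ℕ∞) by push_cast; rfl]
        exact_mod_cast (by omega : I.ncard + 1 < J.ncard + 1)
      obtain ⟨x, hx, hxind⟩ := hIi.augment hJi henc
      have hxe : x ≠ e := fun h => hx.2 (h ▸ mem_insert e I)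
      have hxJ : x ∈ J := hx.1.resolve_left hxe
      have hxI : x ∉ I := fun h => hx.2 (mem_insert_of_mem e h)
      refine ⟨x, hxJ, hxI, ?_, ?_⟩
      · rwa [insert_comm] at hxind
      · simp only [mem_insert_iff]
        push_neg
        exact ⟨fun h => hxe h.symm, heI⟩)
    (subset_ground := fun I hI =>
      subset_diff_singleton ((subset_insert e I).trans hI.1.subset_ground) hI.2)).matroid

variable {hfin : M.E.Finite} {he : M.Indep {e}}

@[simp] theorem conElem_ground : (M.conElem e hfin he).E = M.E \ {e} := rfl

@[simp] theorem conElem_indep_iff :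
    (M.conElem e hfin he).Indep X ↔ M.Indep (insert e X) ∧ e ∉ X := by
  simp [conElem]

theorem conElem_dep_iff (hX : X ⊆ M.E \ {e}) :
    (M.conElem e hfin he).Dep X ↔ M.Dep (insert e X) := by
  have heE : e ∈ M.E := by simpa using he.subset_ground
  have heX : e ∉ X := fun h => (hX h).2 rfl
  rw [dep_iff, dep_iff, conElem_indep_iff]
  simp only [heX, not_false_iff, and_true]
  constructor
  · rintro ⟨h1, _⟩
    exact ⟨h1, insert_subset heE (hX.trans diff_subset)⟩
  · rintro ⟨h1, _⟩
    exact ⟨h1, hX⟩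

theorem conElem_mrank_add_one (hX : X ⊆ M.E \ {e}) :
    (M.conElem e hfin he).mrank X + 1 = M.mrank (insert e X) := by
  have heE : e ∈ M.E := by simpa using he.subset_ground
  have heX : e ∉ X := fun h => (hX h).2 rfl
  obtain ⟨J, hJ, hJr⟩ := (M.conElem e hfin he).exists_basis'_mrank X
  obtain ⟨hJind, heJ⟩ := conElem_indep_iff.1 hJ.indep
  have hJX : J ⊆ X := hJ.subset
  have hb : M.IsBasis' (insert e J) (insert e X) := by
    constructor
    · exact ⟨hJind, insert_subset_insert hJX⟩
    · rintro K ⟨hKind, hKsub⟩ hJK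
      have heK : e ∈ K := hJK (mem_insert e J)
      have hK' : (M.conElem e hfin he).Indep (K \ {e}) := by
        rw [conElem_indep_iff]
        constructor
        · rwa [insert_diff_singleton, insert_eq_of_mem heK]
        · simp
      have hKX : K \ {e} ⊆ X := by
        intro y hy
        rcases hKsub hy.1 with h | h
        · exact absurd h hy.2
        · exact h
      have hJK' : J ⊆ K \ {e} := fun y hy => ⟨hJK (mem_insert_of_mem e hy), fun h => heJ (h ▸ hy)⟩
      have := hJ.2 ⟨hK', hKX⟩ hJK'
      intro y hy
      by_cases hye : y = e
      · exact hye ▸ mem_insert e J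
      · exact mem_insert_of_mem e (this ⟨hy, hye⟩)
  rw [hJr, hb.mrank_eq, ncard_insert_of_notMem heJ
    (hfin.subset (hJX.trans (hX.trans diff_subset)))]

theorem conElem_rkNat_add_one :
    (M.conElem e hfin he).rkNat + 1 = M.rkNat := by
  obtain ⟨B, hB, heB⟩ := he.exists_isBase_superset
  have heBmem : e ∈ B := heB rfl
  have hBbase : (M.conElem e hfin he).IsBase (B \ {e}) := by
    rw [isBase_iff_maximal_indep]
    constructor
    · rw [conElem_indep_iff]
      refine ⟨by rw [insert_diff_singleton, insert_eq_of_mem heBmem]; exact hB.indep, by simp⟩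
    · rintro Y hY hBY
      obtain ⟨hYind, heY⟩ := conElem_indep_iff.1 hY
      have hsub : B ⊆ insert e Y := by
        intro b hb
        by_cases hbe : b = e
        · exact hbe ▸ mem_insert e Y
        · exact mem_insert_of_mem e (hBY ⟨hb, hbe⟩)
      have hEq := hB.eq_of_subset_indep hYind hsub
      intro y hy
      have hyB : y ∈ B := by rw [hEq]; exact mem_insert_of_mem e hy
      exact ⟨hyB, fun h => heY (h ▸ hy)⟩
  have h1 : (M.conElem e hfin he).rkNat = (B \ {e}).ncard := rkNat_eq_ncard_of_base hBbase
  have h2 : M.rkNat = B.ncard := rkNat_eq_ncard_of_base hB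
  have hBfin : B.Finite := hfin.subset hB.subset_ground
  rw [h1, h2, ncard_diff_singleton_add_one heBmem hBfin]

end Matroid
namespace Matroid

variable {α : Type*} {M : Matroid α} {C D X Y S I J K : Set α} {e x a z : α} {k : ℕ}
variable {hfin : M.E.Finite} {he : M.Indep {e}}

/-! ### Cycle basics -/

theorem IsCycle.subset_ground (h : M.IsCycle K) : K ⊆ M.E := by
  obtain ⟨S, hS, rfl⟩ := h
  exact sUnion_subset fun D hD => (hS D hD).subset_ground

theorem IsCycle.exists_circuit_mem (h : M.IsCycle K) (hx : x ∈ K) :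
    ∃ D, M.Circuit D ∧ x ∈ D ∧ D ⊆ K := by
  obtain ⟨S, hS, rfl⟩ := h
  obtain ⟨D, hD, hxD⟩ := hx
  exact ⟨D, hS D hD, hxD, subset_sUnion_of_mem hD⟩

/-! ### Circuits of the contraction -/

theorem conElem_circuit_of_mem (hD : M.Circuit D) (heD : e ∈ D) :
    (M.conElem e hfin he).Circuit (D \ {e}) := by
  have hDe : D \ {e} ⊆ M.E \ {e} := diff_subset_diff_left hD.subset_ground
  have hins : insert e (D \ {e}) = D := by rw [insert_diff_singleton, insert_eq_of_mem heD]
  constructor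
  · rw [conElem_dep_iff hDe, hins]
    exact hD.dep
  · rintro Y hY hYD
    have hYe : Y ⊆ M.E \ {e} := hYD.trans hDe
    rw [conElem_dep_iff hYe] at hY
    have hsub : insert e Y ⊆ D := insert_subset heD (hYD.trans diff_subset)
    have hEq := hD.eq_of_dep_subset hY hsub
    intro d hd
    have : d ∈ insert e Y := hEq ▸ (diff_subset hd : d ∈ D)
    rcases this with h | h
    · exact absurd h hd.2
    · exact h

theorem conElem_exists_circuit (hD : M.Circuit D) (heD : e ∉ D) (hx : x ∈ D) :
    ∃ K, (M.conElem e hfin he).Circuit K ∧ x ∈ K ∧ K ⊆ D := by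
  have hDE : D ⊆ M.E := hD.subset_ground
  have hDfin : D.Finite := hfin.subset hDE
  have hxe : x ≠ e := fun h => heD (h ▸ hx)
  have hDsub : D ⊆ M.E \ {e} := fun y hy => ⟨hDE hy, fun hc => heD (hc ▸ hy)⟩
  have hxN : x ∈ (M.conElem e hfin he).E := hDsub hx
  have hSsub : D \ {x} ⊆ (M.conElem e hfin he).E := diff_subset.trans hDsub
  have hSfin : (D \ {x}).Finite := hDfin.diff (t := {x})
  have hins : insert x (D \ {x}) = D := by rw [insert_diff_singleton, insert_eq_of_mem hx]
  have hxcl : x ∈ (M.conElem e hfin he).closure (D \ {x}) := by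
    refine mem_closure_of_mrank_le hSsub hSfin hxN ?_
    have h1 := conElem_mrank_add_one (hfin := hfin) (he := he)
      (X := insert x (D \ {x})) (by rw [hins]; exact hDsub)
    have h2 := conElem_mrank_add_one (hfin := hfin) (he := he) (X := D \ {x}) hSsub
    have h3 : M.mrank (insert e (insert x (D \ {x}))) = M.mrank (insert e (D \ {x})) := by
      have hu : insert e (D \ {x}) ∪ {x} = insert e (insert x (D \ {x})) := by
        ext y; simp only [mem_union, mem_insert_iff, mem_diff, mem_singleton_iff]; tauto
      rw [← hu]
      refine mrank_union_eq_of_subset_closure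
        (insert_subset (by simpa using he.subset_ground) (diff_subset.trans hDE)) ?_
      intro y hy
      rw [mem_singleton_iff] at hy
      subst hy
      exact M.closure_subset_closure (subset_insert e _) (hD.mem_closure_diff_singleton hx)
    omega
  obtain ⟨K, hK, hxK, hKsub⟩ := exists_circuit_of_mem_closure hxcl (by simp) hSfin
  exact ⟨K, hK, hxK, hins ▸ hKsub⟩

theorem conElem_dep_diff (hX : M.Dep X) : (M.conElem e hfin he).Dep (X \ {e}) := by
  have hXe : X \ {e} ⊆ M.E \ {e} := diff_subset_diff_left hX.subset_ground
  rw [conElem_dep_iff hXe]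
  refine hX.superset (fun y hy => ?_) (insert_subset (by simpa using he.subset_ground)
    (hXe.trans diff_subset))
  by_cases hye : y = e
  · subst hye
    exact mem_insert y _
  · exact mem_insert_of_mem e ⟨hy, hye⟩

theorem conElem_isCycle (hK : M.IsCycle K) : (M.conElem e hfin he).IsCycle (K \ {e}) := by
  set N := M.conElem e hfin he with hN
  refine ⟨{D | N.Circuit D ∧ D ⊆ K \ {e}}, fun D hD => hD.1, ?_⟩
  apply subset_antisymm
  · intro y hy
    obtain ⟨D, hD, hyD, hDK⟩ := hK.exists_circuit_mem hy.1
    by_cases heD : e ∈ D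
    · refine ⟨D \ {e}, ⟨conElem_circuit_of_mem hD heD, diff_subset_diff_left hDK⟩, hyD, hy.2⟩
    · obtain ⟨K', hK', hyK', hK'D⟩ := conElem_exists_circuit hD heD hyD
      refine ⟨K', ⟨hK', ?_⟩, hyK'⟩
      intro w hw
      exact ⟨hDK (hK'D hw), fun hc => (hK'.subset_ground hw).2 hc⟩
  · exact sUnion_subset fun D hD => hD.2

/-! ### Circuits of the restriction -/

theorem restrict_circuit_iff {R : Set α} (hR : R ⊆ M.E) (hDR : D ⊆ R) :
    (M ↾ R).Circuit D ↔ M.Circuit D := by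
  constructor
  · rintro ⟨hdep, hmin⟩
    rw [restrict_dep_iff] at hdep
    refine ⟨⟨hdep.1, hDR.trans hR⟩, ?_⟩
    rintro Y hY hYD
    exact hmin (restrict_dep_iff.2 ⟨hY.1, hYD.trans hDR⟩) hYD
  · rintro ⟨hdep, hmin⟩
    refine ⟨restrict_dep_iff.2 ⟨hdep.1, hDR⟩, ?_⟩
    rintro Y hY hYD
    rw [restrict_dep_iff] at hY
    exact hmin ⟨hY.1, (hY.2.trans hR)⟩ hYD

theorem restrict_isCycle {R : Set α} (hR : R ⊆ M.E) (hK : M.IsCycle K) (hKR : K ⊆ R) :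
    (M ↾ R).IsCycle K := by
  obtain ⟨S, hS, rfl⟩ := hK
  refine ⟨S, fun D hD => ?_, rfl⟩
  exact (restrict_circuit_iff hR ((subset_sUnion_of_mem hD).trans hKR)).2 (hS D hD)

/-! ### uniqueUnion lemmas -/

theorem mem_uniqueUnion_iff {ι : Type*} {A : ι → Set α} {σ : Finset ι} :
    x ∈ uniqueUnion A σ ↔ ∃! i, i ∈ σ ∧ x ∈ A i := Iff.rfl

theorem uniqueUnion_singleton {ι : Type*} (A : ι → Set α) (i : ι) :
    uniqueUnion A {i} = A i := by
  ext y
  simp only [uniqueUnion, Finset.mem_singleton, mem_setOf_eq]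
  constructor
  · rintro ⟨j, ⟨rfl, hj⟩, _⟩
    exact hj
  · intro hy
    exact ⟨i, ⟨rfl, hy⟩, by rintro j ⟨rfl, _⟩; rfl⟩

theorem uniqueUnion_subset {ι : Type*} {A : ι → Set α} {σ : Finset ι} :
    uniqueUnion A σ ⊆ ⋃ i ∈ σ, A i := by
  rintro y ⟨i, ⟨hiσ, hyi⟩, _⟩
  exact mem_biUnion hiσ hyi

theorem uniqueUnion_diff_singleton {ι : Type*} (A : ι → Set α) (σ : Finset ι) (e : α) :
    uniqueUnion (fun i => A i \ {e}) σ = uniqueUnion A σ \ {e} := by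
  ext y
  by_cases hye : y = e
  · subst hye
    constructor
    · rintro ⟨i, ⟨_, _, hne⟩, _⟩
      exact absurd rfl hne
    · rintro ⟨_, hne⟩
      exact absurd rfl hne
  · constructor
    · rintro ⟨i, ⟨hi, hyi, _⟩, hu⟩
      exact ⟨⟨i, ⟨hi, hyi⟩, fun j hj => hu j ⟨hj.1, hj.2, hye⟩⟩, hye⟩
    · rintro ⟨⟨i, ⟨hi, hyi⟩, hu⟩, _⟩
      exact ⟨i, ⟨hi, hyi, hye⟩, fun j hj => hu j ⟨hj.1, hj.2.1⟩⟩

end Matroid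
namespace Matroid

variable {α : Type*} {M : Matroid α} {C D X Y S T I J K P Q : Set α} {e x a z : α} {k : ℕ}
variable {hfin : M.E.Finite} {he : M.Indep {e}}

theorem mrank_empty (M : Matroid α) : M.mrank ∅ = 0 := by
  have := M.mrank_le_ncard ∅ finite_empty
  simpa using this

/-- The Tutte-style lemma: if `M` is rank-connected but the contraction of `e` is not, then
the deletion of `e` is rank-connected. -/
theorem connR_delete_of_not_connR_conElem (hM : M.ConnR) (heE : e ∈ M.E)
    (h2 : 2 ≤ M.E.ncard) (hnc : ¬ (M.conElem e hfin he).ConnR) :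
    (M ↾ (M.E \ {e})).ConnR := by
  rw [ConnR] at hnc
  push_neg at hnc
  obtain ⟨P, Q, hPQ, hPQdisj, hPne, hQne, hPQr⟩ := hnc
  rw [show (M.conElem e hfin he).E = M.E \ {e} from rfl] at hPQ hPQr
  have hPsub : P ⊆ M.E \ {e} := hPQ ▸ subset_union_left
  have hQsub : Q ⊆ M.E \ {e} := hPQ ▸ subset_union_right
  -- translate contraction ranks
  have hP1 := conElem_mrank_add_one (hfin := hfin) (he := he) hPsub
  have hQ1 := conElem_mrank_add_one (hfin := hfin) (he := he) (Subset.refl _)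
  have hQ1' := conElem_mrank_add_one (hfin := hfin) (he := he) hQsub
  have hEeq : insert e (M.E \ {e}) = M.E := by
    rw [insert_diff_singleton, insert_eq_of_mem heE]
  rw [hEeq] at hQ1
  have hkey : M.mrank (insert e P) + M.mrank (insert e Q) ≤ M.mrank M.E + 1 := by
    omega
  intro S T hST hSTdisj hSne hTne
  by_contra hle
  push_neg at hle
  rw [restrict_ground_eq] at hST
  rw [restrict_ground_eq, mrank_restrict M (Subset.refl _), mrank_restrict M (hST ▸ subset_union_left),
    mrank_restrict M (hST ▸ subset_union_right)] at hle
  have hSsub : S ⊆ M.E \ {e} := hST ▸ subset_union_left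
  have hTsub : T ⊆ M.E \ {e} := hST ▸ subset_union_right
  have hSTle : M.mrank S + M.mrank T ≤ M.mrank M.E := by
    have := M.mrank_mono (diff_subset (s := M.E) (t := {e})) hfin
    omega
  -- main corner argument
  have key : ∀ P' Q' : Set α, P' ∪ Q' = M.E \ {e} → Disjoint P' Q' →
      M.mrank (insert e P') + M.mrank (insert e Q') ≤ M.mrank M.E + 1 →
      (S ∩ P').Nonempty → (T ∩ Q').Nonempty → False := by
    intro P' Q' hPQ' hdisj' hkey' hSP hTQ
    have hP'sub : P' ⊆ M.E \ {e} := hPQ' ▸ subset_union_left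
    have hQ'sub : Q' ⊆ M.E \ {e} := hPQ' ▸ subset_union_right
    have hfinS : S.Finite := hfin.subset (hSsub.trans diff_subset)
    have hfinT : T.Finite := hfin.subset (hTsub.trans diff_subset)
    have hfinP : (insert e P').Finite := (hfin.subset (hP'sub.trans diff_subset)).insert e
    have hfinQ : (insert e Q').Finite := (hfin.subset (hQ'sub.trans diff_subset)).insert e
    have s1 := M.mrank_submod S (insert e P') hfinS hfinP
    have s2 := M.mrank_submod T (insert e Q') hfinT hfinQ
    have e1 : S ∩ insert e P' = S ∩ P' := by
      ext y
      simp only [mem_inter_iff, mem_insert_iff]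
      constructor
      · rintro ⟨hyS, rfl | h⟩
        · exact absurd rfl (hSsub hyS).2
        · exact ⟨hyS, h⟩
      · rintro ⟨hyS, h⟩
        exact ⟨hyS, Or.inr h⟩
    have e2 : T ∩ insert e Q' = T ∩ Q' := by
      ext y
      simp only [mem_inter_iff, mem_insert_iff]
      constructor
      · rintro ⟨hyT, rfl | h⟩
        · exact absurd rfl (hTsub hyT).2
        · exact ⟨hyT, h⟩
      · rintro ⟨hyT, h⟩
        exact ⟨hyT, Or.inr h⟩
    rw [e1] at s1
    rw [e2] at s2
    -- the two complementary partitions of M.E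
    have hpart1 : (S ∪ insert e P') ∪ (T ∩ Q') = M.E := by
      apply subset_antisymm
      · refine union_subset (union_subset (hSsub.trans diff_subset) ?_) ?_
        · exact insert_subset heE (hP'sub.trans diff_subset)
        · exact (inter_subset_left.trans (hTsub.trans diff_subset))
      · intro y hy
        by_cases hye : y = e
        · exact Or.inl (Or.inr (hye ▸ mem_insert e P'))
        · have hyd : y ∈ M.E \ {e} := ⟨hy, hye⟩
          rcases (hST ▸ hyd : y ∈ S ∪ T) with h | h
          · exact Or.inl (Or.inl h)
          · rcases (hPQ' ▸ hyd : y ∈ P' ∪ Q') with h' | h'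
            · exact Or.inl (Or.inr (mem_insert_of_mem e h'))
            · exact Or.inr ⟨h, h'⟩
    have hdisj1 : Disjoint (S ∪ insert e P') (T ∩ Q') := by
      rw [disjoint_left]
      rintro y (hy | hy) ⟨hyT, hyQ⟩
      · exact (hSTdisj.ne_of_mem hy hyT) rfl
      · rcases hy with rfl | hy
        · exact (hTsub hyT).2 rfl
        · exact (hdisj'.ne_of_mem hy hyQ) rfl
    have hpart2 : (T ∪ insert e Q') ∪ (S ∩ P') = M.E := by
      apply subset_antisymm
      · refine union_subset (union_subset (hTsub.trans diff_subset) ?_) ?_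
        · exact insert_subset heE (hQ'sub.trans diff_subset)
        · exact (inter_subset_left.trans (hSsub.trans diff_subset))
      · intro y hy
        by_cases hye : y = e
        · exact Or.inl (Or.inr (hye ▸ mem_insert e Q'))
        · have hyd : y ∈ M.E \ {e} := ⟨hy, hye⟩
          rcases (hST ▸ hyd : y ∈ S ∪ T) with h | h
          · rcases (hPQ' ▸ hyd : y ∈ P' ∪ Q') with h' | h'
            · exact Or.inr ⟨h, h'⟩
            · exact Or.inl (Or.inr (mem_insert_of_mem e h'))
          · exact Or.inl (Or.inl h)
    have hdisj2 : Disjoint (T ∪ insert e Q') (S ∩ P') := by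
      rw [disjoint_left]
      rintro y (hy | hy) ⟨hyS, hyP⟩
      · exact (hSTdisj.ne_of_mem hyS hy) rfl
      · rcases hy with rfl | hy
        · exact (hSsub hyS).2 rfl
        · exact (hdisj'.ne_of_mem hyP hy) rfl
    have c1 := hM hpart1 hdisj1 ⟨e, Or.inr (mem_insert e P')⟩ hTQ
    have c2 := hM hpart2 hdisj2 ⟨e, Or.inr (mem_insert e Q')⟩ hSP
    omega
  -- case analysis on which corners are nonempty
  by_cases hSP : (S ∩ P).Nonempty
  · by_cases hTQ : (T ∩ Q).Nonempty
    · exact key P Q hPQ hPQdisj hkey hSP hTQ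
    · -- T ∩ Q = ∅ : then T ⊆ P, so S ∩ Q and T ∩ P must be used
      have hTQ' : T ∩ Q = ∅ := not_nonempty_iff_eq_empty.1 hTQ
      have hTP : (T ∩ P).Nonempty := by
        obtain ⟨t, ht⟩ := hTne
        rcases (hPQ ▸ hTsub ht : t ∈ P ∪ Q) with h | h
        · exact ⟨t, ht, h⟩
        · exact absurd (hTQ' ▸ (⟨ht, h⟩ : t ∈ T ∩ Q)) (notMem_empty t)
      by_cases hSQ : (S ∩ Q).Nonempty
      · exact key Q P (by rw [union_comm]; exact hPQ) hPQdisj.symm (by omega) hSQ hTP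
      · have hSQ' : S ∩ Q = ∅ := not_nonempty_iff_eq_empty.1 hSQ
        obtain ⟨q, hq⟩ := hQne
        rcases (hST ▸ hQsub hq : q ∈ S ∪ T) with h | h
        · exact (notMem_empty q) (hSQ' ▸ (⟨h, hq⟩ : q ∈ S ∩ Q))
        · exact (notMem_empty q) (hTQ' ▸ (⟨h, hq⟩ : q ∈ T ∩ Q))
  · have hSP' : S ∩ P = ∅ := not_nonempty_iff_eq_empty.1 hSP
    have hSQ : (S ∩ Q).Nonempty := by
      obtain ⟨s, hs⟩ := hSne
      rcases (hPQ ▸ hSsub hs : s ∈ P ∪ Q) with h | h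
      · exact absurd (hSP' ▸ (⟨hs, h⟩ : s ∈ S ∩ P)) (notMem_empty s)
      · exact ⟨s, hs, h⟩
    have hTP : (T ∩ P).Nonempty := by
      obtain ⟨p, hp⟩ := hPne
      rcases (hST ▸ hPsub hp : p ∈ S ∪ T) with h | h
      · exact absurd (hSP' ▸ (⟨h, hp⟩ : p ∈ S ∩ P)) (notMem_empty p)
      · exact ⟨p, h, hp⟩
    exact key Q P (by rw [union_comm]; exact hPQ) hPQdisj.symm (by omega) hSQ hTP

end Matroid
namespace Matroid

variable {α : Type*} {M : Matroid α} {C D X Y S T I J K P Q : Set α} {e x a z : α} {k : ℕ}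
variable {hfin : M.E.Finite} {he : M.Indep {e}}

/-- Claim A : the union of the cycles indexed by `σ` has nullity at least `|σ|`. -/
theorem claimA {ι : Type*} [DecidableEq ι] {Cf : ι → Set α} (hfinE : M.E.Finite)
    (hcyc : ∀ i, M.IsCycle (Cf i))
    (hdep : ∀ σ : Finset ι, σ.Nonempty → M.Dep (uniqueUnion Cf σ)) (σ : Finset ι) :
    M.mrank (⋃ i ∈ σ, Cf i) + σ.card ≤ (⋃ i ∈ σ, Cf i).ncard := by
  induction σ using Finset.strongInduction with
  | _ σ IH =>
    rcases σ.eq_empty_or_nonempty with rfl | hσ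
    · simp [mrank_empty]
    obtain ⟨x, ⟨i, ⟨hiσ, hxCi⟩, huniq⟩⟩ := (hdep σ hσ).nonempty
    obtain ⟨D, hD, hxD, hDC⟩ := (hcyc i).exists_circuit_mem hxCi
    set σ' := σ.erase i with hσ'
    have hss : σ' ⊂ σ := Finset.erase_ssubset hiσ
    have hIH := IH σ' hss
    have hU'E : (⋃ j ∈ σ', Cf j) ⊆ M.E := by
      refine iUnion₂_subset fun j _ => (hcyc j).subset_ground
    have hxU' : x ∉ ⋃ j ∈ σ', Cf j := by
      intro hx
      obtain ⟨j, hj, hxj⟩ := by simpa using hx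
      have := huniq j ⟨Finset.mem_of_mem_erase hj, hxj⟩
      exact (Finset.ne_of_mem_erase hj) this
    have hDnot : ¬ D ⊆ ⋃ j ∈ σ', Cf j := fun h => hxU' (h hxD)
    have h1 := nul_union_circuit hU'E hfinE hD hDnot hIH
    have hsub : (⋃ j ∈ σ', Cf j) ∪ D ⊆ ⋃ j ∈ σ, Cf j := by
      refine union_subset ?_ ?_
      · exact iUnion₂_subset fun j hj => subset_biUnion_of_mem (Finset.mem_of_mem_erase hj)
      · exact hDC.trans (subset_biUnion_of_mem hiσ)
    have hUfin : (⋃ j ∈ σ, Cf j).Finite :=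
      hfinE.subset (iUnion₂_subset fun j _ => (hcyc j).subset_ground)
    have h2 := nul_mono hsub hUfin h1
    have hcard : σ'.card + 1 = σ.card := Finset.card_erase_add_one hiσ
    omega

/-- Lifting circuits through the contraction. -/
theorem conElem_circuit_lift (hC : M.IsCycle C) (hCdep : M.Dep C)
    (h : (M.conElem e hfin he).Circuit (C \ {e})) : M.Circuit C := by
  refine ⟨hCdep, ?_⟩
  rintro Y hY hYC
  by_contra hnot
  have hCfin : C.Finite := hfin.subset hCdep.subset_ground
  -- Y \ {e} equals C \ {e}
  have hYdiff := conElem_dep_diff (hfin := hfin) (he := he) hY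
  have hEq1 : Y \ {e} = C \ {e} :=
    h.eq_of_dep_subset hYdiff (diff_subset_diff_left hYC)
  -- hence Y = C \ {e}, with e ∈ C, e ∉ Y
  have hCsubY : C \ {e} ⊆ Y := hEq1 ▸ diff_subset
  obtain ⟨c, hcC, hcY⟩ := not_subset.1 hnot
  have hce : c = e := by
    by_contra hce
    exact hcY (hCsubY ⟨hcC, hce⟩)
  subst hce
  have heY : c ∉ Y := hcY
  have hYeq : Y = C \ {c} := by
    apply subset_antisymm
    · exact fun y hy => ⟨hYC hy, fun hyc => heY (hyc ▸ hy)⟩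
    · exact hCsubY
  -- C \ {c} contains a circuit which must be all of C \ {c}
  obtain ⟨D, hD, hDY⟩ := hY.exists_circuit_subset (hCfin.subset hYC)
  have hDe : c ∉ D := fun hc => heY (hDY hc)
  have hD_N : (M.conElem c hfin he).Dep D := by
    rw [conElem_dep_iff (fun y hy => ⟨hD.subset_ground hy, fun hyc => hDe (by rwa [show y = c from hyc] at hy)⟩)]
    exact hD.dep.superset (subset_insert c D)
      (insert_subset (by simpa using he.subset_ground) hD.subset_ground)
  have hEq2 : D = C \ {c} := h.eq_of_dep_subset hD_N (hDY.trans hYeq.subset)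
  -- c lies on a circuit D' inside C ; then D' \ {c} = C \ {c} so D' = C
  obtain ⟨D', hD', hcD', hD'C⟩ := hC.exists_circuit_mem hcC
  have hD'N := conElem_circuit_of_mem (hfin := hfin) (he := he) hD' hcD'
  have hEq3 : D' \ {c} = C \ {c} :=
    h.eq_of_dep_subset hD'N.dep (diff_subset_diff_left hD'C)
  have hD'eq : D' = C := by
    apply subset_antisymm hD'C
    intro y hy
    by_cases hyc : y = c
    · exact hyc ▸ hcD'
    · exact diff_subset (hEq3 ▸ (⟨hy, hyc⟩ : y ∈ C \ {c}) : y ∈ D' \ {c})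
  -- so C is a circuit, contradicting that Y = C \ {c} is dependent
  have : M.Indep Y := (hD'eq ▸ hD').ssubset_indep (hYeq ▸ diff_singleton_ssubset.2 hcC)
  exact hY.not_indep this

end Matroid
namespace Matroid

variable {α : Type*} {M : Matroid α} {B C D X Y S T I J K P Q : Set α} {e x a z : α} {k : ℕ}

theorem uniqueUnion_subtype {ι : Type*} [DecidableEq ι] (A : ι → Set α) (i₀ : ι)
    (σ : Finset {j : ι // j ≠ i₀}) :
    uniqueUnion (fun j : {j : ι // j ≠ i₀} => A j.1) σ =
      uniqueUnion A (σ.image Subtype.val) := by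
  ext y
  constructor
  · rintro ⟨j, ⟨hjσ, hyA⟩, hu⟩
    refine ⟨j.1, ⟨Finset.mem_image_of_mem _ hjσ, hyA⟩, ?_⟩
    rintro i ⟨hiimg, hyi⟩
    obtain ⟨k, hkσ, rfl⟩ := Finset.mem_image.1 hiimg
    rw [hu k ⟨hkσ, hyi⟩]
  · rintro ⟨i, ⟨hiimg, hyi⟩, hu⟩
    obtain ⟨k, hkσ, rfl⟩ := Finset.mem_image.1 hiimg
    refine ⟨k, ⟨hkσ, hyi⟩, ?_⟩
    rintro k' ⟨hk'σ, hyk'⟩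
    exact Subtype.ext (hu k'.1 ⟨Finset.mem_image_of_mem _ hk'σ, hyk'⟩)

theorem restrict_base_of_base (hB : M.IsBase B) {R : Set α} (hBR : B ⊆ R) (hRE : R ⊆ M.E) :
    (M ↾ R).IsBase B := by
  rw [isBase_restrict_iff']
  constructor
  · exact ⟨hB.indep, hBR⟩
  · rintro Y ⟨hYind, hYR⟩ hBY
    exact (hB.eq_of_subset_indep hYind hBY).symm.subset

/-- The main engine : induction on the size of the ground set. -/
theorem statement6_aux (n : ℕ) :
    ∀ (M : Matroid α), M.E.Finite → M.E.ncard ≤ n → M.ConnR →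
    ∀ (ι : Type) [Fintype ι] (Cf : ι → Set α),
    Fintype.card ι = M.E.ncard - M.rkNat → (∀ i, M.IsCycle (Cf i)) →
    (∀ σ : Finset ι, σ.Nonempty → M.Dep (uniqueUnion Cf σ)) →
    ∀ i, M.Circuit (Cf i) := by
  induction n using Nat.strong_induction_on with
  | _ n IH =>
  intro M hfin hn hconn ι instF Cf hcard hcyc hdep i
  haveI : DecidableEq ι := Classical.decEq ι
  haveI : Nonempty ι := ⟨i⟩
  have hdepC : ∀ j, M.Dep (Cf j) := by
    intro j
    have := hdep {j} ⟨j, Finset.mem_singleton_self j⟩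
    rwa [uniqueUnion_singleton] at this
  have hCE : ∀ j, Cf j ⊆ M.E := fun j => (hcyc j).subset_ground
  have hrk : M.rkNat = M.mrank M.E := (mrank_ground M).symm
  have hrk_le : M.rkNat ≤ M.E.ncard := by rw [hrk]; exact M.mrank_le_ncard M.E hfin
  have hgpos : 1 ≤ Fintype.card ι := Fintype.card_pos
  have hE1 : 1 ≤ M.E.ncard := by
    rcases (hdepC i).nonempty with ⟨y, hy⟩
    exact (Set.ncard_pos hfin).2 ⟨y, hCE i hy⟩
  have hEq : Fintype.card ι + M.rkNat = M.E.ncard := by omega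
  by_cases hE2 : 2 ≤ M.E.ncard
  swap
  · -- |E| = 1 : the ground set is a single loop
    have hE1' : M.E.ncard = 1 := by omega
    obtain ⟨w, hw⟩ := (ncard_eq_one (s := M.E)).1 hE1'
    have hCw : Cf i = {w} := by
      apply subset_antisymm (by rw [← hw]; exact hCE i)
      obtain ⟨y, hy⟩ := (hdepC i).nonempty
      have : y = w := by have := hCE i hy; rw [hw] at this; exact this
      exact this ▸ singleton_subset_iff.2 hy
    refine ⟨hdepC i, ?_⟩
    rintro Y hY hYC
    obtain ⟨y, hy⟩ := hY.nonempty
    have hyw : y = w := by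
      have := hYC hy
      rw [hCw] at this
      exact this
    rw [hCw]
    exact singleton_subset_iff.2 (hyw ▸ hy)
  -- |E| ≥ 2
  have hnl : ∀ e ∈ M.E, M.Indep {e} := fun e heE => hconn.nonloop hfin hE2 heE
  by_cases hA : ∃ e, ∃ _ : e ∈ M.E, ∃ he : M.Indep {e}, (M.conElem e hfin he).ConnR
  · -- Case A: contract e
    obtain ⟨e, heE, he, hNconn⟩ := hA
    have hNground : (M.conElem e hfin he).E = M.E \ {e} := rfl
    have hNfin : (M.conElem e hfin he).E.Finite := by rw [hNground]; exact hfin.diff (t := {e})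
    have hNn : (M.conElem e hfin he).E.ncard + 1 = M.E.ncard := by
      rw [hNground]
      exact ncard_diff_singleton_add_one heE hfin
    have hrk1 : 1 ≤ M.rkNat := by
      rw [hrk]
      have h1 := he.ncard_le_mrank (by simpa using he.subset_ground) hfin
      simpa [ncard_singleton] using h1
    have hNrk : (M.conElem e hfin he).rkNat + 1 = M.rkNat := conElem_rkNat_add_one
    have hcard' : Fintype.card ι = (M.conElem e hfin he).E.ncard - (M.conElem e hfin he).rkNat := by
      omega
    have hres := IH ((M.conElem e hfin he).E.ncard) (by omega) (M.conElem e hfin he) hNfin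
      le_rfl hNconn ι (fun j => Cf j \ {e}) hcard'
      (fun j => conElem_isCycle (hcyc j))
      (fun σ hσ => by
        rw [uniqueUnion_diff_singleton]
        exact conElem_dep_diff (hdep σ hσ))
    exact conElem_circuit_lift (hcyc i) (hdepC i) (hres i)
  · -- Case B: all contractions disconnected
    push_neg at hA
    have delrec : ∀ e ∈ M.E, ∀ he : M.Indep {e}, ∀ i₀ : ι, e ∈ Cf i₀ →
        (∀ j : ι, e ∈ Cf j → j = i₀) → ∀ j : ι, j ≠ i₀ → M.Circuit (Cf j) := by
      intro e heE he i₀ _ hpriv j hj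
      have hMd : (M ↾ (M.E \ {e})).ConnR :=
        connR_delete_of_not_connR_conElem hconn heE hE2 (hA e heE he)
      obtain ⟨B, hB, heB⟩ := hconn.exists_base_not_mem hfin hE2 heE
      have hBres : (M ↾ (M.E \ {e})).IsBase B :=
        restrict_base_of_base hB (subset_diff_singleton hB.subset_ground heB) diff_subset
      have hrkM' : (M ↾ (M.E \ {e})).rkNat = M.rkNat := by
        rw [rkNat_eq_ncard_of_base hBres, rkNat_eq_ncard_of_base hB]
      have hM'ground : (M ↾ (M.E \ {e})).E = M.E \ {e} := rfl
      have hM'fin : (M ↾ (M.E \ {e})).E.Finite := by rw [hM'ground]; exact hfin.diff (t := {e})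
      have hM'n : (M ↾ (M.E \ {e})).E.ncard + 1 = M.E.ncard := by
        rw [hM'ground]
        exact ncard_diff_singleton_add_one heE hfin
      haveI instSub : Fintype {k : ι // k ≠ i₀} := inferInstance
      have hcards : Fintype.card {k : ι // k ≠ i₀} + 1 = Fintype.card ι := by
        have h1 : Fintype.card {k : ι // k = i₀} = 1 := Fintype.card_subtype_eq i₀
        have h2 := Fintype.card_subtype_compl (fun k : ι => k = i₀)
        rw [h1] at h2
        rw [h2]
        omega
      have hcard'' : Fintype.card {k : ι // k ≠ i₀} =
          (M ↾ (M.E \ {e})).E.ncard - (M ↾ (M.E \ {e})).rkNat := by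
        omega
      have hCjE : ∀ k : ι, k ≠ i₀ → Cf k ⊆ M.E \ {e} := by
        intro k hk y hy
        exact ⟨hCE k hy, fun hyc => hk (hpriv k ((show y = e from hyc) ▸ hy))⟩
      have hres := IH ((M ↾ (M.E \ {e})).E.ncard) (by omega) (M ↾ (M.E \ {e})) hM'fin
        le_rfl hMd {k : ι // k ≠ i₀} (fun k => Cf k.1) hcard''
        (fun k => restrict_isCycle diff_subset (hcyc k.1) (hCjE k.1 k.2))
        (fun σ hσ => by
          rw [uniqueUnion_subtype]
          have himg : (σ.image Subtype.val).Nonempty := hσ.image _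
          have hup := hdep _ himg
          rw [restrict_dep_iff]
          refine ⟨hup.1, ?_⟩
          rintro y ⟨w, ⟨hwimg, hyw⟩, hyu⟩
          obtain ⟨wk, _, rfl⟩ := Finset.mem_image.1 hwimg
          exact hCjE wk.1 wk.2 hyw)
      exact (restrict_circuit_iff diff_subset (hCjE j hj)).1 (hres ⟨j, hj⟩)
    have huniv_ne : (Finset.univ : Finset ι).Nonempty := Finset.univ_nonempty
    obtain ⟨x₀, ⟨i₀, ⟨_, hx₀i₀⟩, hx₀u⟩⟩ := (hdep Finset.univ huniv_ne).nonempty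
    have hx₀E : x₀ ∈ M.E := hCE i₀ hx₀i₀
    have hx₀priv : ∀ j, x₀ ∈ Cf j → j = i₀ := fun j hj => hx₀u j ⟨Finset.mem_univ j, hj⟩
    have hres₀ := delrec x₀ hx₀E (hnl x₀ hx₀E) i₀ hx₀i₀ hx₀priv
    by_cases hji : i = i₀
    swap
    · exact hres₀ i hji
    subst hji
    by_cases hg1 : Fintype.card ι = 1
    · -- corank 1 : direct nullity argument
      refine ⟨hdepC i, ?_⟩
      rintro Y hY hYC
      by_contra hnot
      obtain ⟨y, hyC, hyY⟩ := not_subset.1 hnot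
      obtain ⟨D, hD, hDY⟩ := hY.exists_circuit_subset (hfin.subset (hYC.trans (hCE i)))
      obtain ⟨D', hD', hyD', _⟩ := (hcyc i).exists_circuit_mem hyC
      have hDE : D ⊆ M.E := hD.subset_ground
      have hI1 : M.mrank D + 1 ≤ D.ncard := by
        have := hD.mrank_add_one_eq (hfin.subset hDE)
        omega
      have hD'n : ¬ D' ⊆ D := fun h => hyY (hDY (h hyD'))
      have h2 := nul_union_circuit hDE hfin hD' hD'n hI1
      have h3 := nul_mono (union_subset hDE hD'.subset_ground) hfin h2
      rw [← hrk] at h3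
      omega
    · have hg2 : 2 ≤ Fintype.card ι := by omega
      by_cases hstuck : ∃ y ∈ uniqueUnion Cf Finset.univ, y ∉ Cf i
      · obtain ⟨y, hy, hyn⟩ := hstuck
        obtain ⟨j₁, ⟨_, hyj₁⟩, hyu⟩ := hy
        have hj₁ : j₁ ≠ i := fun h => hyn (h ▸ hyj₁)
        have hypriv : ∀ k, y ∈ Cf k → k = j₁ := fun k hk => hyu k ⟨Finset.mem_univ k, hk⟩
        exact delrec y (hCE j₁ hyj₁) (hnl y (hCE j₁ hyj₁)) j₁ hyj₁ hypriv i (Ne.symm hj₁)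
      · -- top-stuck : contradiction with connectivity
        exfalso
        push_neg at hstuck
        have hpriv_all : ∀ y ∈ uniqueUnion Cf Finset.univ, ∀ j, j ≠ i → y ∉ Cf j := by
          intro y hy j hj hyj
          have hyi : y ∈ Cf i := hstuck y hy
          obtain ⟨w, hw, hu⟩ := hy
          have h1 : j = w := hu j ⟨Finset.mem_univ j, hyj⟩
          have h2 : i = w := hu i ⟨Finset.mem_univ i, hyi⟩
          exact hj (h1.trans h2.symm)
        have hUU_E : uniqueUnion Cf Finset.univ ⊆ M.E :=
          uniqueUnion_subset.trans (iUnion₂_subset fun j _ => hCE j)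
        obtain ⟨Z, hZ, hZsub⟩ := (hdep Finset.univ huniv_ne).exists_circuit_subset
          (hfin.subset hUU_E)
        have hAE : (⋃ j ∈ Finset.univ.erase i, Cf j) ⊆ M.E :=
          iUnion₂_subset fun j _ => hCE j
        have hZA : ¬ Z ⊆ ⋃ j ∈ Finset.univ.erase i, Cf j := by
          obtain ⟨z0, hz0⟩ := hZ.nonempty
          intro hsub
          obtain ⟨j, hj, hz0j⟩ : ∃ j ∈ Finset.univ.erase i, z0 ∈ Cf j := by
            simpa using hsub hz0
          exact hpriv_all z0 (hZsub hz0) j (Finset.ne_of_mem_erase hj) hz0j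
        have hclaim := claimA hfin hcyc hdep (Finset.univ.erase i)
        have hAcard : (Finset.univ.erase i).card + 1 = Fintype.card ι := by
          rw [Finset.card_erase_add_one (Finset.mem_univ i), Finset.card_univ]
        have h2 := nul_union_circuit hAE hfin hZ hZA hclaim
        have hcover : M.E ⊆ (⋃ j ∈ Finset.univ.erase i, Cf j) ∪ Z := by
          intro w hw
          by_contra hwn
          obtain ⟨Yw, hYw, hwYw⟩ := hconn.exists_circuit_mem hfin hE2 hw
          have hnsub : ¬ Yw ⊆ (⋃ j ∈ Finset.univ.erase i, Cf j) ∪ Z := fun h => hwn (h hwYw)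
          have h3 := nul_union_circuit (union_subset hAE hZ.subset_ground) hfin hYw hnsub h2
          have h4 := nul_mono (union_subset (union_subset hAE hZ.subset_ground)
            hYw.subset_ground) hfin h3
          rw [← hrk] at h4
          omega
        have hEU : (⋃ j ∈ Finset.univ.erase i, Cf j) ∪ Z = M.E :=
          subset_antisymm (union_subset hAE hZ.subset_ground) hcover
        have hdisj : Disjoint (⋃ j ∈ Finset.univ.erase i, Cf j) Z := by
          rw [disjoint_right]
          intro z0 hz0 hz0A
          obtain ⟨j, hj, hz0j⟩ : ∃ j ∈ Finset.univ.erase i, z0 ∈ Cf j := by simpa using hz0A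
          exact hpriv_all z0 (hZsub hz0) j (Finset.ne_of_mem_erase hj) hz0j
        obtain ⟨j₁, hj₁⟩ := Fintype.exists_ne_of_one_lt_card (by omega) i
        have hAne : (⋃ j ∈ Finset.univ.erase i, Cf j).Nonempty := by
          obtain ⟨y, hy⟩ := (hdepC j₁).nonempty
          exact ⟨y, mem_biUnion (Finset.mem_erase.2 ⟨hj₁, Finset.mem_univ j₁⟩) hy⟩
        have hZr := hZ.mrank_add_one_eq (hfin.subset hZ.subset_ground)
        have hcards2 : (⋃ j ∈ Finset.univ.erase i, Cf j).ncard + Z.ncard = M.E.ncard := by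
          rw [← ncard_union_eq hdisj (hfin.subset hAE) (hfin.subset hZ.subset_ground), hEU]
        have hcv := hconn hEU hdisj hAne hZ.nonempty
        rw [← hrk] at hcv
        omega

end Matroid

/-- In a connected matroid (every two distinct ground set elements lie in a
common circuit), every member of a cycle system is a circuit. -/
theorem statement_6 {α : Type*} {g : ℕ} (M : Matroid α) (hE : M.E.Finite)
    (hconn : ∀ e ∈ M.E, ∀ f ∈ M.E, e ≠ f → ∃ D, M.Circuit D ∧ e ∈ D ∧ f ∈ D)
    (C : Fin g → Set α) (hCS : M.IsCycleSystem C) :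
    ∀ i, M.Circuit (C i) := by
  obtain ⟨hcard, hcyc, hdep⟩ := hCS
  have hconnR := Matroid.connR_of_pairs hE hconn
  exact Matroid.statement6_aux M.E.ncard M hE le_rfl hconnR (Fin g) C hcard hcyc hdep
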